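/- Let q be a power of 2, let F be a finite field with q^6 elements, and let b, c ∈ F be nonzero with c ≠ b^{q^2+1}. Then for every s ∈ {1,2,4,5}, every δ ∈ F with δ^{q^3+1} ∉ {0,1}, every field automorphism ρ of F, and all A, B, C, D ∈ F with A·D − B·C ≠ 0, the set {(A·ρ(x) + B·ρ(δ·x^{q^s} + x^{q^{s+3}}), C·ρ(x) + D·ρ(δ·x^{q^s} + x^{q^{s+3}})) : x ∈ F} is different from U_{b,c}. (That is, U_{b,c} is not ΓL(2,q^6)-equivalent to the subspace U^{3,6}_{s,δ} = {(x, δ·x^{q^s} + x^{q^{s+3}}) : x ∈ F}.) -/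
import Mathlib


noncomputable section

def F1 (q : ℕ) {F : Type*} [Field F] (c : F) : F :=
  c ^ (q ^ 4 + 2 * q ^ 3 + q ^ 2 + q + 1) + c ^ (q ^ 4 + q ^ 3 + q ^ 2 + 1)
    + c ^ (q ^ 3 + q + 1) + c + c ^ (2 * q ^ 3 + q ^ 2 + q) + c ^ (q ^ 3 + q ^ 2 + q)
    + c ^ (q ^ 3) + 1

def F2 (q : ℕ) {F : Type*} [Field F] (c : F) : F :=
  c ^ (q ^ 3 + q ^ 2 + 2 * q + 2) + c ^ (q ^ 2 + q + 2) + c ^ (q ^ 3 + 2 * q ^ 2 + 2 * q + 1)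
    + c ^ (2 * q ^ 3 + 2 * q ^ 2 + q + 1) + c ^ (q ^ 2 + q + 1) + c ^ (q ^ 3 + q + 1)
    + c ^ (q ^ 3 + q ^ 2 + 1) + c + c ^ (2 * q ^ 3 + q ^ 2 + q) + c ^ (q ^ 3 + q ^ 2 + q)
    + c ^ (q ^ 3) + 1

def F3 (q : ℕ) {F : Type*} [Field F] (c : F) : F := c ^ (q ^ 2 + q + 1) + 1

def F4 (q : ℕ) {F : Type*} [Field F] (c : F) : F :=
  c ^ (2 * q ^ 2 + q + 4) + c ^ (3 * q ^ 2 + 2 * q + 3) + c ^ (q ^ 2 + 2 * q + 3)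
    + c ^ (3 * q ^ 2 + q + 3) + c ^ (q ^ 2 + q + 3) + c ^ (2 * q ^ 2 + 3) + c ^ (q ^ 2 + 3)
    + c ^ (4 * q ^ 2 + q + 2) + c ^ (q + 2) + c ^ (3 * q ^ 2 + 2) + c ^ 2
    + c ^ (3 * q ^ 2 + 2 * q + 1) + c ^ (q ^ 2 + 2 * q + 1) + c ^ (3 * q ^ 2 + q + 1)
    + c ^ (q ^ 2 + q + 1) + c ^ (3 * q ^ 2 + 1) + c + c ^ (2 * q ^ 2 + q) + c ^ (2 * q ^ 2)
    + c ^ (q ^ 2)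

def F5 (q : ℕ) {F : Type*} [Field F] (c : F) : F :=
  c ^ (2 * q ^ 2 + q + 2) + c ^ (q ^ 2 + q + 2) + c ^ (2 * q ^ 2 + 2)
    + c ^ (2 * q ^ 2 + q + 1) + c ^ (q ^ 2 + q + 1) + 1

def frakC (q : ℕ) (F : Type*) [Field F] : Set F :=
  {c | c ^ (q ^ 2) ≠ c ∧ F1 q c = 0 ∧ F2 q c = 0 ∧ F3 q c * F4 q c * F5 q c ≠ 0}

def IsScattered (q : ℕ) {F : Type*} [Field F] (f : F → F) : Prop :=
  ∀ y z : F, y ≠ 0 → z ≠ 0 → f y * z = f z * y → ∃ l : F, l ^ q = l ∧ y = l * z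

open Polynomial in
lemma six_coeffs {F : Type} [Field F] [Fintype F] (q : ℕ) (hq : 2 ≤ q)
    (hF : q ^ 6 ≤ Fintype.card F) (a0 a1 a2 a3 a4 a5 : F)
    (h : ∀ t : F, a0 * t + a1 * t ^ q + a2 * t ^ q ^ 2 + a3 * t ^ q ^ 3
      + a4 * t ^ q ^ 4 + a5 * t ^ q ^ 5 = 0) :
    a0 = 0 ∧ a1 = 0 ∧ a2 = 0 ∧ a3 = 0 ∧ a4 = 0 ∧ a5 = 0 := by
  classical
  have hne : ∀ i j : ℕ, i ≠ j → q ^ i ≠ q ^ j :=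
    fun i j hij h' => hij (Nat.pow_right_injective hq h')
  have hmono : ∀ i j : ℕ, i ≤ j → q ^ i ≤ q ^ j := fun i j hij => Nat.pow_le_pow_right (by omega) hij
  have hp0 : (C a0 * X ^ 1 + C a1 * X ^ q + C a2 * X ^ q ^ 2 + C a3 * X ^ q ^ 3
      + C a4 * X ^ q ^ 4 + C a5 * X ^ q ^ 5 : Polynomial F) = 0 := by
    apply Polynomial.eq_zero_of_natDegree_lt_card_of_eval_eq_zero _ Function.injective_id
    · intro t
      simp only [eval_add, eval_mul, eval_C, eval_pow, eval_X, id]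
      rw [pow_one]
      exact h t
    · have h5 : (C a0 * X ^ 1 + C a1 * X ^ q + C a2 * X ^ q ^ 2 + C a3 * X ^ q ^ 3
          + C a4 * X ^ q ^ 4 + C a5 * X ^ q ^ 5 : Polynomial F).natDegree ≤ q ^ 5 := by
        have hb : ∀ (a : F) (k : ℕ), k ≤ q ^ 5 → (C a * X ^ k).natDegree ≤ q ^ 5 :=
          fun a k hk => (natDegree_C_mul_le _ _).trans (by simpa using hk)
        refine (natDegree_add_le _ _).trans (max_le ?_ (hb _ _ le_rfl))
        refine (natDegree_add_le _ _).trans (max_le ?_ (hb _ _ (hmono 4 5 (by omega))))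
        refine (natDegree_add_le _ _).trans (max_le ?_ (hb _ _ (hmono 3 5 (by omega))))
        refine (natDegree_add_le _ _).trans (max_le ?_ (hb _ _ (hmono 2 5 (by omega))))
        refine (natDegree_add_le _ _).trans
          (max_le (hb _ _ ?_) (by simpa using hb a1 (q ^ 1) (hmono 1 5 (by omega))))
        calc (1:ℕ) ≤ q ^ 0 := by norm_num
          _ ≤ q ^ 5 := hmono 0 5 (by omega)
      calc _ ≤ q ^ 5 := h5
        _ < q ^ 6 := Nat.pow_lt_pow_right (by omega) (by omega)
        _ ≤ Fintype.card F := hF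
  have key : ∀ n : ℕ, a0 * (if n = 1 then (1:F) else 0) + a1 * (if n = q then 1 else 0)
      + a2 * (if n = q ^ 2 then 1 else 0) + a3 * (if n = q ^ 3 then 1 else 0)
      + a4 * (if n = q ^ 4 then 1 else 0) + a5 * (if n = q ^ 5 then 1 else 0) = 0 := by
    intro n
    have := congrArg (fun r : Polynomial F => r.coeff n) hp0
    simpa only [coeff_add, coeff_C_mul, coeff_X_pow, coeff_zero] using this
  refine ⟨?_, ?_, ?_, ?_, ?_, ?_⟩
  · have := key 1
    rw [if_pos rfl, if_neg (by simpa using hne 0 1 (by omega)),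
      if_neg (by simpa using hne 0 2 (by omega)), if_neg (by simpa using hne 0 3 (by omega)),
      if_neg (by simpa using hne 0 4 (by omega)), if_neg (by simpa using hne 0 5 (by omega))] at this
    simpa using this
  · have := key q
    rw [if_neg (by simpa using hne 1 0 (by omega)), if_pos rfl,
      if_neg (by simpa using hne 1 2 (by omega)), if_neg (by simpa using hne 1 3 (by omega)),
      if_neg (by simpa using hne 1 4 (by omega)), if_neg (by simpa using hne 1 5 (by omega))] at this
    simpa using this
  · have := key (q ^ 2)
    rw [if_neg (by simpa using hne 2 0 (by omega)), if_neg (by simpa using hne 2 1 (by omega)),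
      if_pos rfl, if_neg (hne 2 3 (by omega)),
      if_neg (hne 2 4 (by omega)), if_neg (hne 2 5 (by omega))] at this
    simpa using this
  · have := key (q ^ 3)
    rw [if_neg (by simpa using hne 3 0 (by omega)), if_neg (by simpa using hne 3 1 (by omega)),
      if_neg (hne 3 2 (by omega)), if_pos rfl,
      if_neg (hne 3 4 (by omega)), if_neg (hne 3 5 (by omega))] at this
    simpa using this
  · have := key (q ^ 4)
    rw [if_neg (by simpa using hne 4 0 (by omega)), if_neg (by simpa using hne 4 1 (by omega)),
      if_neg (hne 4 2 (by omega)), if_neg (hne 4 3 (by omega)), if_pos rfl,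
      if_neg (hne 4 5 (by omega))] at this
    simpa using this
  · have := key (q ^ 5)
    rw [if_neg (by simpa using hne 5 0 (by omega)), if_neg (by simpa using hne 5 1 (by omega)),
      if_neg (hne 5 2 (by omega)), if_neg (hne 5 3 (by omega)), if_neg (hne 5 4 (by omega)),
      if_pos rfl] at this
    simpa using this

theorem statement6 (e q : ℕ) (he : 1 ≤ e) (hq : q = 2 ^ e)
    (F : Type) [Field F] [Fintype F] (hF : Fintype.card F = q ^ 6)
    (b c : F) (hb : b ≠ 0) (hc : c ≠ 0) (hbc : c ≠ b ^ (q ^ 2 + 1)) :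
    ∀ s ∈ ({1, 2, 4, 5} : Set ℕ), ∀ δ : F,
      δ ^ (q ^ 3 + 1) ≠ 0 → δ ^ (q ^ 3 + 1) ≠ 1 →
      ∀ ρ : F ≃+* F, ∀ A B C D : F, A * D - B * C ≠ 0 →
        {p : F × F | ∃ x : F,
            p = (A * ρ x + B * ρ (δ * x ^ (q ^ s) + x ^ (q ^ (s + 3))),
              C * ρ x + D * ρ (δ * x ^ (q ^ s) + x ^ (q ^ (s + 3))))} ≠
          {p : F × F | ∃ x : F, p = (x, x ^ q + b * x ^ (q ^ 3) + c * x ^ (q ^ 5))} := by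
  have hq2 : 2 ≤ q := by
    subst hq
    calc 2 = 2 ^ 1 := (pow_one 2).symm
      _ ≤ 2 ^ e := Nat.pow_le_pow_right (by omega) he
  have hqne : q ≠ 0 := by omega
  have hchar : CharP F 2 := by
    obtain ⟨p, hp⟩ := CharP.exists F
    have hprime : p.Prime := CharP.char_is_prime F p
    obtain ⟨n, hpn, hcard⟩ := FiniteField.card F p
    have hpq : p ^ (n : ℕ) = 2 ^ (e * 6) := by
      rw [← hcard, hF, hq, ← pow_mul]
    have hpdvd : p ∣ 2 ^ (e * 6) := by
      rw [← hpq]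
      exact dvd_pow_self p (by exact_mod_cast n.ne_zero)
    have hp2 : p = 2 :=
      (Nat.prime_dvd_prime_iff_eq hprime Nat.prime_two).mp (hprime.dvd_of_dvd_pow hpdvd)
    rwa [hp2] at hp
  haveI : Fact (Nat.Prime 2) := ⟨Nat.prime_two⟩
  have frob : ∀ (n : ℕ) (x y : F), (x + y) ^ q ^ n = x ^ q ^ n + y ^ q ^ n := by
    intro n x y
    rw [hq, ← pow_mul]
    exact add_pow_char_pow ..
  have frob1 : ∀ x y : F, (x + y) ^ q = x ^ q + y ^ q := by
    intro x y; simpa using frob 1 x y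
  have hcomp : ∀ (x : F) (j k : ℕ), (x ^ q ^ j) ^ q ^ k = x ^ q ^ (j + k) := by
    intro x j k; rw [← pow_mul, ← pow_add]
  have hcomp1 : ∀ (x : F) (j : ℕ), (x ^ q ^ j) ^ q = x ^ q ^ (j + 1) := by
    intro x j; rw [← pow_mul, ← pow_succ]
  have hred : ∀ (x : F) (k : ℕ), x ^ q ^ (k + 6) = x ^ q ^ k := by
    intro x k
    rw [add_comm, pow_add, pow_mul, ← hF, FiniteField.pow_card]
  have hred6 : ∀ x : F, x ^ q ^ 6 = x := by intro x; simpa using hred x 0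
  have hred7 : ∀ x : F, x ^ q ^ 7 = x ^ q := by intro x; simpa using hred x 1
  have hred8 : ∀ x : F, x ^ q ^ 8 = x ^ q ^ 2 := fun x => hred x 2
  have hred9 : ∀ x : F, x ^ q ^ 9 = x ^ q ^ 3 := fun x => hred x 3
  have hred10 : ∀ x : F, x ^ q ^ 10 = x ^ q ^ 4 := fun x => hred x 4
  have hred11 : ∀ x : F, x ^ q ^ 11 = x ^ q ^ 5 := fun x => hred x 5
  have hred12 : ∀ x : F, x ^ q ^ 12 = x := fun x => (hred x 6).trans (hred6 x)
  have hred13 : ∀ x : F, x ^ q ^ 13 = x ^ q := fun x => (hred x 7).trans (hred7 x)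
  intro s hs δ hδ0 hδ1 ρ A B C D hABCD hset
  have hδ : δ ≠ 0 := by rintro rfl; exact hδ0 (zero_pow (by positivity))
  have hδ'0 : ρ δ ≠ 0 := by
    intro h0
    apply hδ
    have := congrArg ρ.symm h0
    simpa using this
  have E : ∀ t : F, C * t + D * (ρ δ * t ^ q ^ s + t ^ q ^ (s + 3))
      = (A * t + B * (ρ δ * t ^ q ^ s + t ^ q ^ (s + 3))) ^ q
        + b * (A * t + B * (ρ δ * t ^ q ^ s + t ^ q ^ (s + 3))) ^ q ^ 3
        + c * (A * t + B * (ρ δ * t ^ q ^ s + t ^ q ^ (s + 3))) ^ q ^ 5 := by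
    intro t
    have hmem : (A * ρ (ρ.symm t) + B * ρ (δ * (ρ.symm t) ^ q ^ s + (ρ.symm t) ^ q ^ (s + 3)),
        C * ρ (ρ.symm t) + D * ρ (δ * (ρ.symm t) ^ q ^ s + (ρ.symm t) ^ q ^ (s + 3)))
        ∈ {p : F × F | ∃ x : F, p = (x, x ^ q + b * x ^ (q ^ 3) + c * x ^ (q ^ 5))} := by
      rw [← hset]; exact ⟨ρ.symm t, rfl⟩
    obtain ⟨y, hy⟩ := hmem
    simp only [map_add, map_mul, map_pow, RingEquiv.apply_symm_apply, Prod.mk.injEq] at hy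
    obtain ⟨hy1, hy2⟩ := hy
    rw [← hy1] at hy2
    exact hy2
  have expand : ∀ (j m n : ℕ) (t : F),
      (A * t + B * (ρ δ * t ^ q ^ m + t ^ q ^ n)) ^ q ^ j
      = A ^ q ^ j * t ^ q ^ j + B ^ q ^ j * (ρ δ) ^ q ^ j * t ^ q ^ (m + j)
        + B ^ q ^ j * t ^ q ^ (n + j) := by
    intro j m n t
    have h1 : A * t + B * (ρ δ * t ^ q ^ m + t ^ q ^ n)
        = (A * t + (B * ρ δ) * t ^ q ^ m) + B * t ^ q ^ n := by ring
    rw [h1, frob, frob]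
    simp only [mul_pow, hcomp]
  have expand1 : ∀ (m n : ℕ) (t : F),
      (A * t + B * (ρ δ * t ^ q ^ m + t ^ q ^ n)) ^ q
      = A ^ q * t ^ q + B ^ q * (ρ δ) ^ q * t ^ q ^ (m + 1) + B ^ q * t ^ q ^ (n + 1) := by
    intro m n t
    have h1 : A * t + B * (ρ δ * t ^ q ^ m + t ^ q ^ n)
        = (A * t + (B * ρ δ) * t ^ q ^ m) + B * t ^ q ^ n := by ring
    rw [h1, frob1, frob1]
    simp only [mul_pow, hcomp1]
  have hpow_ne : ∀ (x : F) (k : ℕ), k ≠ 0 → x ^ k = 0 → x = 0 := by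
    intro x k hk h0
    exact pow_eq_zero_iff hk |>.mp h0
  simp only [Set.mem_insert_iff, Set.mem_singleton_iff] at hs
  rcases hs with rfl | rfl | rfl | rfl
  · -- s = 1
    obtain ⟨k0, k1, k2, k3, k4, k5⟩ := six_coeffs q hq2 (le_of_eq hF.symm)
      (C - c * B ^ q ^ 5 * (ρ δ) ^ q ^ 5)
      (D * ρ δ - A ^ q - b * B ^ q ^ 3)
      (0 - B ^ q * (ρ δ) ^ q)
      (0 - b * A ^ q ^ 3 - c * B ^ q ^ 5)
      (D - b * B ^ q ^ 3 * (ρ δ) ^ q ^ 3)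
      (0 - B ^ q - c * A ^ q ^ 5)
      (by
        intro t
        have h := E t
        simp only [Nat.reduceAdd] at h
        rw [expand1 1 4 t, expand 3 1 4 t, expand 5 1 4 t] at h
        simp only [Nat.reduceAdd, hred6, hred7, hred8, hred9] at h
        linear_combination h)
    have hB : B = 0 := by
      rw [zero_sub, neg_eq_zero] at k2
      rcases mul_eq_zero.mp k2 with h' | h'
      · exact hpow_ne _ _ hqne h'
      · exact absurd (hpow_ne _ _ hqne h') hδ'0
    have hC : C = 0 := by
      rw [hB] at k0
      simpa [zero_pow (pow_ne_zero 5 hqne)] using k0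
    have hA : A = 0 := by
      rw [hB] at k5
      have k5' : c * A ^ q ^ 5 = 0 := by
        have hBq : (0 : F) ^ q = 0 := zero_pow hqne
        linear_combination -k5 - hBq
      rcases mul_eq_zero.mp k5' with h' | h'
      · exact absurd h' hc
      · exact hpow_ne _ _ (pow_ne_zero 5 hqne) h'
    apply hABCD
    rw [hA, hB]
    ring
  · -- s = 2
    obtain ⟨k0, k1, k2, k3, k4, k5⟩ := six_coeffs q hq2 (le_of_eq hF.symm)
      (C - B ^ q)
      (0 - A ^ q - c * B ^ q ^ 5 * (ρ δ) ^ q ^ 5)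
      (D * ρ δ - b * B ^ q ^ 3)
      (0 - B ^ q * (ρ δ) ^ q - b * A ^ q ^ 3)
      (0 - c * B ^ q ^ 5)
      (D - b * B ^ q ^ 3 * (ρ δ) ^ q ^ 3 - c * A ^ q ^ 5)
      (by
        intro t
        have h := E t
        simp only [Nat.reduceAdd] at h
        rw [expand1 2 5 t, expand 3 2 5 t, expand 5 2 5 t] at h
        simp only [Nat.reduceAdd, hred6, hred7, hred8, hred9, hred10] at h
        linear_combination h)
    have hB : B = 0 := by
      have k4' : c * B ^ q ^ 5 = 0 := by linear_combination -k4
      rcases mul_eq_zero.mp k4' with h' | h'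
      · exact absurd h' hc
      · exact hpow_ne _ _ (pow_ne_zero 5 hqne) h'
    have hC : C = 0 := by
      rw [hB] at k0
      simpa [zero_pow hqne] using k0
    have hA : A = 0 := by
      rw [hB] at k3
      have k3' : b * A ^ q ^ 3 = 0 := by
        have hBq : (0 : F) ^ q = 0 := zero_pow hqne
        linear_combination -k3 - (ρ δ) ^ q * hBq
      rcases mul_eq_zero.mp k3' with h' | h'
      · exact absurd h' hb
      · exact hpow_ne _ _ (pow_ne_zero 3 hqne) h'
    apply hABCD
    rw [hA, hB]
    ring
  · -- s = 4
    obtain ⟨k0, k1, k2, k3, k4, k5⟩ := six_coeffs q hq2 (le_of_eq hF.symm)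
      (C - c * B ^ q ^ 5)
      (D - A ^ q - b * B ^ q ^ 3 * (ρ δ) ^ q ^ 3)
      (0 - B ^ q)
      (0 - b * A ^ q ^ 3 - c * B ^ q ^ 5 * (ρ δ) ^ q ^ 5)
      (D * ρ δ - b * B ^ q ^ 3)
      (0 - B ^ q * (ρ δ) ^ q - c * A ^ q ^ 5)
      (by
        intro t
        have h := E t
        simp only [Nat.reduceAdd] at h
        rw [expand1 4 7 t, expand 3 4 7 t, expand 5 4 7 t] at h
        simp only [Nat.reduceAdd, hred6, hred7, hred8, hred9, hred10, hred11, hred12] at h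
        linear_combination h)
    have hB : B = 0 := by
      have k2' : B ^ q = 0 := by linear_combination -k2
      exact hpow_ne _ _ hqne k2'
    have hC : C = 0 := by
      rw [hB] at k0
      simpa [zero_pow (pow_ne_zero 5 hqne)] using k0
    have hA : A = 0 := by
      rw [hB] at k3
      have k3' : b * A ^ q ^ 3 = 0 := by
        have hBq : (0 : F) ^ q ^ 5 = 0 := zero_pow (pow_ne_zero 5 hqne)
        linear_combination -k3 - c * (ρ δ) ^ q ^ 5 * hBq
      rcases mul_eq_zero.mp k3' with h' | h'
      · exact absurd h' hb
      · exact hpow_ne _ _ (pow_ne_zero 3 hqne) h'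
    apply hABCD
    rw [hA, hB]
    ring
  · -- s = 5
    obtain ⟨k0, k1, k2, k3, k4, k5⟩ := six_coeffs q hq2 (le_of_eq hF.symm)
      (C - B ^ q * (ρ δ) ^ q)
      (0 - A ^ q - c * B ^ q ^ 5)
      (D - b * B ^ q ^ 3 * (ρ δ) ^ q ^ 3)
      (0 - B ^ q - b * A ^ q ^ 3)
      (0 - c * B ^ q ^ 5 * (ρ δ) ^ q ^ 5)
      (D * ρ δ - b * B ^ q ^ 3 - c * A ^ q ^ 5)
      (by
        intro t
        have h := E t
        simp only [Nat.reduceAdd] at h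
        rw [expand1 5 8 t, expand 3 5 8 t, expand 5 5 8 t] at h
        simp only [Nat.reduceAdd, hred6, hred7, hred8, hred9, hred10, hred11, hred12,
          hred13] at h
        linear_combination h)
    have hB : B = 0 := by
      have k4' : c * B ^ q ^ 5 * (ρ δ) ^ q ^ 5 = 0 := by linear_combination -k4
      rcases mul_eq_zero.mp k4' with h' | h'
      · rcases mul_eq_zero.mp h' with h'' | h''
        · exact absurd h'' hc
        · exact hpow_ne _ _ (pow_ne_zero 5 hqne) h''
      · exact absurd (hpow_ne _ _ (pow_ne_zero 5 hqne) h') hδ'0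
    have hC : C = 0 := by
      rw [hB] at k0
      simpa [zero_pow hqne] using k0
    have hA : A = 0 := by
      rw [hB] at k1
      have k1' : A ^ q = 0 := by
        have hBq : (0 : F) ^ q ^ 5 = 0 := zero_pow (pow_ne_zero 5 hqne)
        linear_combination -k1 - c * hBq
      exact hpow_ne _ _ hqne k1'
    apply hABCD
    rw [hA, hB]
    ring
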